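/- For two distinct points z, x ∈ ℂ, the improper integral (1/π) ∫_ℂ 1/((u - z)(u - x)) dA(u), understood as the limit over disks D_R (or over the plane with small disks around z and x removed), equals -(conj(z) - conj(x))/(z - x). -/

import Mathlib

/-!
Partial fractions write the integrand as `(z - x)⁻¹ * ((u - z)⁻¹ - (u - x)⁻¹)`, so it suffices
to show `∫_{‖u‖ ≤ R} (u - a)⁻¹ dA(u) = -π * conj a` whenever `‖a‖ < R`; in particular the disk
integrals are eventually constant. In polar coordinates the inner integral over `‖u‖ = r` is
`2πr` times the circle average of `(u - a)⁻¹`. For `r < ‖a‖` the mean value property gives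
`-a⁻¹`; for `r > ‖a‖` the substitution `u = r / w` turns the integrand into `w / (r - a * w)`,
holomorphic on the closed unit disk and zero at its centre, so the average is `0`. Hence the
disk integral is `∫₀^‖a‖ 2πr * (-a⁻¹) dr = -π ‖a‖² / a = -π * conj a`.
-/

open MeasureTheory Filter Set Metric Real ComplexConjugate

theorem locallyIntegrable_inv_sub (a : ℂ) : LocallyIntegrable (fun u : ℂ => (u - a)⁻¹) := by
  have h₀ : LocallyIntegrable (fun u : ℂ => u⁻¹) :=
    locallyIntegrable_of_norm_le_rpow (C := 1) (α := 1) (by simp) (by simp)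
      (.of_forall fun u => by simp [Real.rpow_neg_one]) measurable_inv.aestronglyMeasurable
  rw [← map_sub_right_eq_self volume a] at h₀
  exact (locallyIntegrable_map_homeomorph (Homeomorph.subRight a)).1 h₀

theorem circleAverage_inv_sub_of_lt_norm {a c : ℂ} {r : ℝ} (h : |r| < ‖a - c‖) :
    circleAverage (fun u => (u - a)⁻¹) c r = (c - a)⁻¹ := by
  refine DiffContOnCl.circleAverage (DifferentiableOn.diffContOnCl fun u hu => ?_)
  have hu : u ≠ a := by
    rintro rfl
    exact (mem_closedBall.1 (closure_ball_subset_closedBall hu)).not_gt (by rwa [dist_eq_norm])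
  exact ((differentiableAt_id.sub_const a).inv (sub_ne_zero.2 hu)).differentiableWithinAt

theorem circleAverage_inv_sub_of_norm_lt {a : ℂ} {r : ℝ} (h : ‖a‖ < r) :
    circleAverage (fun u => (u - a)⁻¹) 0 r = 0 := by
  rw [circleAverage_eq_circleAverage_zero_one, ← circleAverage_zero_one_congr_inv]
  have hr : 0 < r := (norm_nonneg a).trans_lt h
  have hden : ∀ w ∈ closedBall (0 : ℂ) 1, (r : ℂ) - a * w ≠ 0 := fun w hw => by
    refine sub_ne_zero.2 fun he => ?_
    have : ‖a * w‖ ≤ ‖a‖ := by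
      rw [norm_mul]; exact mul_le_of_le_one_right (norm_nonneg a) (mem_closedBall_zero_iff.1 hw)
    rw [← he, Complex.norm_real, Real.norm_of_nonneg hr.le] at this
    linarith
  calc circleAverage (fun w => ((r : ℂ) * w⁻¹ + 0 - a)⁻¹) 0 1
      = circleAverage (fun w => w / (r - a * w)) 0 1 := by
        refine circleAverage_congr_sphere fun w hw => ?_
        rw [abs_one] at hw
        have hw₀ : w ≠ 0 := ne_zero_of_mem_sphere one_ne_zero ⟨w, hw⟩
        have := hden w (sphere_subset_closedBall hw)
        rw [add_zero]
        field_simp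
    _ = 0 / (r - a * 0) := by
        refine DiffContOnCl.circleAverage (DifferentiableOn.diffContOnCl ?_)
        rw [abs_one, closure_ball _ one_ne_zero]
        exact differentiableOn_id.div (by fun_prop) hden
    _ = 0 := by simp

section PolarCoordinates

variable {E : Type*} [NormedAddCommGroup E] [NormedSpace ℝ E]

theorem integrableOn_polarCoord_symm_smul {f : ℂ → E} (hf : Integrable f) :
    IntegrableOn (fun p : ℝ × ℝ => p.1 • f (Complex.polarCoord.symm p)) polarCoord.target := by
  have hF : Integrable (f ∘ Complex.measurableEquivRealProd.symm) :=
    (Complex.volume_preserving_equiv_real_prod.symm.integrable_comp_emb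
      Complex.measurableEquivRealProd.symm.measurableEmbedding).2 hf
  have h := (integrableOn_image_iff_integrableOn_abs_det_fderiv_smul volume
    polarCoord.open_target.measurableSet
    (fun p _ => (hasFDerivAt_polarCoord_symm p).hasFDerivWithinAt) polarCoord.symm.injOn _).1
    (by rw [polarCoord.symm_image_target_eq_source]; exact hF.integrableOn)
  refine h.congr_fun (fun p hp => ?_) polarCoord.open_target.measurableSet
  beta_reduce
  rw [det_fderivPolarCoordSymm, abs_of_pos (show 0 < p.1 from hp.1)]
  rfl

theorem setIntegral_Ioo_circleMap_eq_circleAverage (f : ℂ → E) (c : ℂ) (r : ℝ) :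
    ∫ θ in Ioo (-π) π, f (circleMap c r θ) = (2 * π) • circleAverage f c r := by
  rw [circleAverage_eq_integral_add (-π), smul_inv_smul₀ (by positivity),
    intervalIntegral.integral_comp_add_right (fun θ => f (circleMap c r θ)),
    intervalIntegral.integral_of_le (by linarith [pi_pos]), integral_Ioc_eq_integral_Ioo,
    zero_add, show 2 * π + -π = π by ring]

theorem integral_eq_integral_Ioi_circleAverage {f : ℂ → E} (hf : Integrable f) :
    ∫ u, f u = ∫ r in Ioi 0, (2 * π * r) • circleAverage f 0 r := by
  rw [← Complex.integral_comp_polarCoord_symm, polarCoord_target, Measure.volume_eq_prod,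
    setIntegral_prod _ (by simpa [polarCoord_target, Measure.volume_eq_prod] using
      integrableOn_polarCoord_symm_smul hf)]
  refine setIntegral_congr_fun measurableSet_Ioi fun r _ => ?_
  have hpolar : ∀ θ : ℝ, Complex.polarCoord.symm (r, θ) = circleMap 0 r θ := fun θ => by
    simp [circleMap, Complex.exp_mul_I, Complex.ofReal_cos, Complex.ofReal_sin]
  simp only [hpolar, integral_smul, setIntegral_Ioo_circleMap_eq_circleAverage, smul_smul]
  ring_nf

end PolarCoordinates

theorem setIntegral_closedBall_inv_sub {a : ℂ} {R : ℝ} (hR : ‖a‖ < R) :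
    ∫ u in closedBall (0 : ℂ) R, (u - a)⁻¹ = -π * conj a := by
  set f := (closedBall (0 : ℂ) R).indicator fun u => (u - a)⁻¹
  have hf : Integrable f := ((locallyIntegrable_inv_sub a).integrableOn_isCompact
    (isCompact_closedBall 0 R)).integrable_indicator measurableSet_closedBall
  have hradial : ∀ᵐ r : ℝ, r ∈ Ioi 0 → (2 * π * r) • circleAverage f 0 r =
      (Ioo 0 ‖a‖).indicator (fun r : ℝ => (2 * π * r) • (-a⁻¹)) r := by
    filter_upwards [volume.ae_ne ‖a‖] with r hra (hr : 0 < r)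
    rcases le_or_gt r R with hrR | hRr
    · have hsphere : EqOn f (fun u => (u - a)⁻¹) (sphere 0 |r|) := fun u hu =>
        indicator_of_mem (sphere_subset_closedBall.trans
          (closedBall_subset_closedBall ((abs_of_pos hr).trans_le hrR)) hu) _
      rw [circleAverage_congr_sphere hsphere]
      rcases lt_or_gt_of_ne hra with hlt | hgt
      · rw [circleAverage_inv_sub_of_lt_norm (by rwa [abs_of_pos hr, sub_zero]),
          indicator_of_mem (show r ∈ Ioo 0 ‖a‖ from ⟨hr, hlt⟩), zero_sub, inv_neg]
      · rw [circleAverage_inv_sub_of_norm_lt hgt, indicator_of_notMem (fun h => h.2.not_gt hgt),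
          smul_zero]
    · have hsphere : EqOn f 0 (sphere 0 |r|) := fun u hu => indicator_of_notMem (fun hu' => by
        rw [mem_sphere_zero_iff_norm, abs_of_pos hr] at hu
        exact (mem_closedBall_zero_iff.1 hu').not_gt (hu ▸ hRr)) _
      rw [circleAverage_congr_sphere hsphere, Pi.zero_def, circleAverage_const, smul_zero,
        indicator_of_notMem (fun h => h.2.not_gt (hR.trans hRr))]
  rw [← integral_indicator measurableSet_closedBall, integral_eq_integral_Ioi_circleAverage hf,
    setIntegral_congr_ae measurableSet_Ioi hradial, setIntegral_indicator measurableSet_Ioo,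
    inter_eq_self_of_subset_right Ioo_subset_Ioi_self, integral_smul_const,
    integral_Ioc_eq_integral_Ioo.symm, ← intervalIntegral.integral_of_le (norm_nonneg a),
    intervalIntegral.integral_const_mul, integral_id]
  rcases eq_or_ne a 0 with rfl | ha
  · simp
  · rw [Complex.real_smul]
    push_cast
    rw [← Complex.mul_conj']
    field_simp
    ring

theorem setIntegral_closedBall_inv_sub_mul_inv_sub {z x : ℂ} {R : ℝ} (hzx : z ≠ x)
    (hz : ‖z‖ < R) (hx : ‖x‖ < R) :
    ∫ u in closedBall (0 : ℂ) R, 1 / ((u - z) * (u - x)) = -π * (conj z - conj x) / (z - x) := by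
  have hzx' : z - x ≠ 0 := sub_ne_zero.2 hzx
  have hpartial : ∀ᵐ u : ℂ, u ∈ closedBall 0 R →
      1 / ((u - z) * (u - x)) = (z - x)⁻¹ * ((u - z)⁻¹ - (u - x)⁻¹) := by
    filter_upwards [volume.ae_ne z, volume.ae_ne x] with u huz hux _
    have := sub_ne_zero.2 huz
    have := sub_ne_zero.2 hux
    field_simp
    ring
  have hint (a : ℂ) : IntegrableOn (fun u : ℂ => (u - a)⁻¹) (closedBall 0 R) :=
    (locallyIntegrable_inv_sub a).integrableOn_isCompact (isCompact_closedBall 0 R)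
  rw [setIntegral_congr_ae measurableSet_closedBall hpartial, integral_const_mul,
    integral_sub (hint z) (hint x), setIntegral_closedBall_inv_sub hz,
    setIntegral_closedBall_inv_sub hx]
  field_simp
  ring

/-- The improper plane integral `(1/π) ∫_ℂ 1/((u-z)(u-x)) dA(u)`, understood as the limit
over disks `D_R` as `R → ∞`, equals `-(conj z - conj x)/(z - x)`. -/
theorem plane_integral_two_point
    (z x : ℂ) (hzx : z ≠ x) :
    Tendsto
      (fun R : ℝ =>
        ((1 : ℂ) / (Real.pi : ℂ)) *
          ∫ u in Metric.closedBall (0 : ℂ) R, 1 / ((u - z) * (u - x)))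
      atTop
      (nhds (-((starRingEnd ℂ) z - (starRingEnd ℂ) x) / (z - x))) := by
  have hπ : (π : ℂ) ≠ 0 := Complex.ofReal_ne_zero.2 pi_ne_zero
  refine tendsto_const_nhds.congr' ?_
  filter_upwards [eventually_gt_atTop (max ‖z‖ ‖x‖)] with R hR
  rw [setIntegral_closedBall_inv_sub_mul_inv_sub hzx ((le_max_left _ _).trans_lt hR)
    ((le_max_right _ _).trans_lt hR)]
  field_simp
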